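/- arXiv:2405.16455 — 7 statements merged into one kernel-verified Lean document; each statement's English description precedes it below -/
import Mathlib

section
/- Let R : ℝ → ℝ be twice differentiable on the interval (0, 1). Then R satisfies the preference matching differential equation x·R''(x) + 2·R'(x) + 1/x = 0 for all x ∈ (0, 1) if and only if there exist constants C₁, C₂ ∈ ℝ such that R(x) = −log x + C₁ + C₂/x for all x ∈ (0, 1). -/
/-!
Multiplying the equation by `x` turns it into `(x² R' + x)' = 0`, so `x² R' + x` is a constant
`C`. Then `R' = C / x² - 1 / x`, i.e. `(R + log x + C / x)' = 0`, so `R + log x + C / x` is a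
constant `C₁`. Every step is an equivalence, because on the connected open interval a function has
zero derivative exactly when it is constant.
-/

open Set

theorem IsOpen.forall_eq_zero_iff_exists_const_of_hasDerivAt {𝕜 G : Type*} [RCLike 𝕜]
    [NormedAddCommGroup G] [NormedSpace 𝕜 G] {s : Set 𝕜} {f f' : 𝕜 → G}
    (hs : IsOpen s) (hs' : IsPreconnected s) (hf : ∀ x ∈ s, HasDerivAt f (f' x) x) :
    (∀ x ∈ s, f' x = 0) ↔ ∃ c, ∀ x ∈ s, f x = c := by
  refine ⟨fun hf' ↦ ?_, fun ⟨c, hc⟩ x hx ↦ ?_⟩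
  · refine hs.exists_is_const_of_deriv_eq_zero hs'
      (fun x hx ↦ (hf x hx).differentiableAt.differentiableWithinAt) fun x hx ↦ ?_
    rw [(hf x hx).deriv, hf' x hx, Pi.zero_apply]
  · exact (hf x hx).unique <| (hasDerivAt_const x c).congr_of_eventuallyEq
      (Filter.eventually_of_mem (hs.mem_nhds hx) hc)

theorem hasDerivAt_sq_mul_add_self {R' : ℝ → ℝ} {R''x x : ℝ} (hx : x ≠ 0)
    (h : HasDerivAt R' R''x x) :
    HasDerivAt (fun y ↦ y ^ 2 * R' y + y) (x * (x * R''x + 2 * R' x + 1 / x)) x :=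
  (((hasDerivAt_pow 2 x).mul h).add (hasDerivAt_id x)).congr_deriv (by field_simp; ring)

theorem hasDerivAt_add_log_add_div {R : ℝ → ℝ} {R'x x : ℝ} (C : ℝ) (hx : x ≠ 0)
    (h : HasDerivAt R R'x x) :
    HasDerivAt (fun y ↦ R y + Real.log y + C / y) ((x ^ 2 * R'x + x - C) / x ^ 2) x :=
  ((h.add (Real.hasDerivAt_log hx)).add ((hasDerivAt_inv hx).const_mul C)).congr_deriv
    (by field_simp; ring)

/-- A twice differentiable `R` on `(0,1)` satisfies the preference matching ODE
`x·R''(x) + 2·R'(x) + 1/x = 0` iff `R(x) = -log x + C₁ + C₂/x` on `(0,1)`. -/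
theorem preference_matching_ode_solution
    (R R' R'' : ℝ → ℝ)
    (hR' : ∀ x ∈ Set.Ioo (0 : ℝ) 1, HasDerivAt R (R' x) x)
    (hR'' : ∀ x ∈ Set.Ioo (0 : ℝ) 1, HasDerivAt R' (R'' x) x) :
    (∀ x ∈ Set.Ioo (0 : ℝ) 1, x * R'' x + 2 * R' x + 1 / x = 0) ↔
      ∃ C₁ C₂ : ℝ, ∀ x ∈ Set.Ioo (0 : ℝ) 1, R x = -Real.log x + C₁ + C₂ / x := by
  have first_integral := isOpen_Ioo.forall_eq_zero_iff_exists_const_of_hasDerivAt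
    isPreconnected_Ioo fun x hx ↦ hasDerivAt_sq_mul_add_self hx.1.ne' (hR'' x hx)
  have second_integral (C : ℝ) := isOpen_Ioo.forall_eq_zero_iff_exists_const_of_hasDerivAt
    isPreconnected_Ioo fun x hx ↦ hasDerivAt_add_log_add_div C hx.1.ne' (hR' x hx)
  calc (∀ x ∈ Ioo (0 : ℝ) 1, x * R'' x + 2 * R' x + 1 / x = 0)
      ↔ ∀ x ∈ Ioo (0 : ℝ) 1, x * (x * R'' x + 2 * R' x + 1 / x) = 0 :=
        forall₂_congr fun x hx ↦ by simp [hx.1.ne']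
    _ ↔ ∃ C, ∀ x ∈ Ioo (0 : ℝ) 1, x ^ 2 * R' x + x = C := first_integral
    _ ↔ ∃ C, ∀ x ∈ Ioo (0 : ℝ) 1, (x ^ 2 * R' x + x - C) / x ^ 2 = 0 :=
        exists_congr fun C ↦ forall₂_congr fun x hx ↦ by simp [hx.1.ne', sub_eq_zero]
    _ ↔ ∃ C C₁, ∀ x ∈ Ioo (0 : ℝ) 1, R x + Real.log x + C / x = C₁ :=
        exists_congr second_integral
    _ ↔ ∃ C₁ C₂ : ℝ, ∀ x ∈ Ioo (0 : ℝ) 1, R x = -Real.log x + C₁ + C₂ / x := by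
      refine ⟨fun ⟨C, C₁, h⟩ ↦ ⟨C₁, -C, fun x hx ↦ ?_⟩,
        fun ⟨C₁, C₂, h⟩ ↦ ⟨-C₂, C₁, fun x hx ↦ ?_⟩⟩
      · rw [neg_div, ← h x hx]; ring
      · rw [h x hx, neg_div]; ring
end

section
/- Let k ≥ 2, let q be a strictly positive probability vector on Fin k (the reference model), and let r : Fin k → ℝ. Define π̂_i = q_i·exp(r_i)/Σ_j q_j·exp(r_j) (the KL RLHF optimal policy with β = 1) and π*_i = exp(r_i)/Σ_j exp(r_j) (the preference-matching softmax policy). Then π̂ = π* if and only if q is the uniform distribution, i.e., q_i = 1/k for all i. In particular, standard KL-regularized RLHF with a non-uniform reference model does not yield the preference-matching policy. -/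
/-!
Both policies normalize the weights `exp (r i)`, the first after multiplying them by `q i`.
Comparing coordinates, `π̂ = π*` says exactly that `q i = (∑ j, q j * exp (r j)) / ∑ j, exp (r j)`
for every `i`, i.e. that `q` is constant; a constant probability vector on `Fin k` is uniform.
Conversely, normalization is insensitive to multiplying all weights by the same nonzero constant.
-/

open Finset

section

variable {ι : Type*} [Fintype ι]

noncomputable def normalizeWeights (w : ι → ℝ) : ι → ℝ := fun i => w i / ∑ j, w j

theorem normalizeWeights_const_mul {c : ℝ} (hc : c ≠ 0) (w : ι → ℝ) :
    normalizeWeights (fun i => c * w i) = normalizeWeights w := by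
  funext i
  simp only [normalizeWeights, ← mul_sum, mul_div_mul_left _ _ hc]

theorem eq_div_of_normalizeWeights_mul_eq {e q : ι → ℝ} (he : ∀ i, 0 < e i)
    (h : normalizeWeights (fun i => q i * e i) = normalizeWeights e) (i : ι) :
    q i = (∑ j, q j * e j) / ∑ j, e j := by
  have hS : 0 < ∑ j, e j := sum_pos (fun j _ => he j) ⟨i, mem_univ i⟩
  have hi : q i * e i / ∑ j, q j * e j = e i / ∑ j, e j := congrFun h i
  have hT : ∑ j, q j * e j ≠ 0 := by
    intro hT
    rw [hT, div_zero] at hi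
    exact (div_pos (he i) hS).ne' hi.symm
  field_simp at hi ⊢
  exact mul_right_cancel₀ (he i).ne' (by linarith)

theorem eq_one_div_card_of_forall_eq_of_sum_eq_one {q : ι → ℝ} {c : ℝ} (hq : ∀ i, q i = c)
    (hs : ∑ i, q i = 1) : c = 1 / Fintype.card ι := by
  simp only [hq, sum_const, card_univ, nsmul_eq_mul] at hs
  exact eq_one_div_of_mul_eq_one_right hs

theorem normalizeWeights_mul_eq_iff {e q : ι → ℝ} (he : ∀ i, 0 < e i) (hs : ∑ i, q i = 1) :
    normalizeWeights (fun i => q i * e i) = normalizeWeights e ↔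
      ∀ i, q i = 1 / Fintype.card ι := by
  constructor
  · intro h i
    have hconst := eq_div_of_normalizeWeights_mul_eq he h
    rw [hconst i]
    exact eq_one_div_card_of_forall_eq_of_sum_eq_one hconst hs
  · intro hq
    have hc : (1 / Fintype.card ι : ℝ) ≠ 0 := by
      intro hc
      simp [hq, hc] at hs
    simp only [hq]
    exact normalizeWeights_const_mul hc e

end

theorem kl_rlhf_policy_eq_softmax_iff_uniform_general
    (k : ℕ) (q r : Fin k → ℝ)
    (hqs : ∑ i, q i = 1)
    (πhat πstar : Fin k → ℝ)
    (hπhat : ∀ i, πhat i = q i * Real.exp (r i) / ∑ j, q j * Real.exp (r j))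
    (hπstar : ∀ i, πstar i = Real.exp (r i) / ∑ j, Real.exp (r j)) :
    πhat = πstar ↔ ∀ i, q i = 1 / (k : ℝ) := by
  have hπhat' : πhat = normalizeWeights (fun i => q i * Real.exp (r i)) := funext hπhat
  have hπstar' : πstar = normalizeWeights (fun i => Real.exp (r i)) := funext hπstar
  rw [hπhat', hπstar', normalizeWeights_mul_eq_iff (fun i => Real.exp_pos (r i)) hqs,
    Fintype.card_fin]

/-- The KL RLHF optimal policy (β = 1) equals the preference-matching softmax policy
iff the reference model is uniform. -/
theorem kl_rlhf_policy_eq_softmax_iff_uniform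
    (k : ℕ) (hk : 2 ≤ k) (q r : Fin k → ℝ)
    (hq : ∀ i, 0 < q i) (hqs : ∑ i, q i = 1)
    (πhat πstar : Fin k → ℝ)
    (hπhat : ∀ i, πhat i = q i * Real.exp (r i) / ∑ j, q j * Real.exp (r j))
    (hπstar : ∀ i, πstar i = Real.exp (r i) / ∑ j, Real.exp (r j)) :
    πhat = πstar ↔ ∀ i, q i = 1 / (k : ℝ) :=
  kl_rlhf_policy_eq_softmax_iff_uniform_general k q r hqs πhat πstar hπhat hπstar
end

section
/- Let k ≥ 2, β > 0, let q be a strictly positive probability vector on Fin k, let r : Fin k → ℝ, and define π̂_i = q_i·exp(r_i/β)/Σ_j q_j·exp(r_j/β). For any two distinct indices i₁, i₂, let p_ref = q_{i₁}/(q_{i₁}+q_{i₂}) and p_rew = exp(r_{i₁}/β)/(exp(r_{i₁}/β)+exp(r_{i₂}/β)). Then π̂_{i₁}/(π̂_{i₁}+π̂_{i₂}) = p_ref·p_rew/(p_ref·p_rew + (1−p_ref)·(1−p_rew)). That is, the pairwise preference of the KL RLHF–aligned model is the normalized product of the reference model's and the reward model's pairwise preferences. -/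
/-!
Both preferences are Bradley–Terry ratios `a / (a + b)`. The aligned model is
`πhat i ∝ q i * exp (r i / β)`, so the normalizing constant cancels from its pairwise
preference, and the normalized product of `a / (a + b)` and `c / (c + d)` is
`a * c / (a * c + b * d)` because `1 - a / (a + b) = b / (a + b)`.
-/

section BradleyTerry

variable {K : Type*} [Field K] {a b c d : K}

theorem div_div_add_div_div_cancel (hc : c ≠ 0) : a / c / (a / c + b / c) = a / (a + b) := by
  rw [← add_div, div_div_div_cancel_right₀ hc]

theorem one_sub_div_add_self (hab : a + b ≠ 0) : 1 - a / (a + b) = b / (a + b) := by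
  rw [one_sub_div hab, add_sub_cancel_left]

theorem normalized_product_div_add_div (hab : a + b ≠ 0) (hcd : c + d ≠ 0) :
    a / (a + b) * (c / (c + d)) /
        (a / (a + b) * (c / (c + d)) + (1 - a / (a + b)) * (1 - c / (c + d)))
      = a * c / (a * c + b * d) := by
  rw [one_sub_div_add_self hab, one_sub_div_add_self hcd, div_mul_div_comm, div_mul_div_comm,
    div_div_add_div_div_cancel (mul_ne_zero hab hcd)]

end BradleyTerry

theorem kl_rlhf_pairwise_preference_product_general
    (k : ℕ) (β : ℝ)
    (q r : Fin k → ℝ) (hq : ∀ i, 0 < q i)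
    (πhat : Fin k → ℝ)
    (hπhat : ∀ i, πhat i = q i * Real.exp (r i / β) / ∑ j, q j * Real.exp (r j / β))
    (i₁ i₂ : Fin k)
    (pref prew : ℝ)
    (hpref : pref = q i₁ / (q i₁ + q i₂))
    (hprew : prew = Real.exp (r i₁ / β) / (Real.exp (r i₁ / β) + Real.exp (r i₂ / β))) :
    πhat i₁ / (πhat i₁ + πhat i₂)
      = pref * prew / (pref * prew + (1 - pref) * (1 - prew)) := by
  have hS : 0 < ∑ j, q j * Real.exp (r j / β) :=
    Finset.sum_pos (fun i _ => mul_pos (hq i) (Real.exp_pos _)) ⟨i₁, Finset.mem_univ _⟩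
  rw [hπhat, hπhat, hpref, hprew, div_div_add_div_div_cancel hS.ne',
    normalized_product_div_add_div (add_pos (hq i₁) (hq i₂)).ne' (by positivity)]

/-- The pairwise preference of the KL RLHF–aligned model is the normalized product of
the reference model's and the reward model's pairwise preferences. -/
theorem kl_rlhf_pairwise_preference_product
    (k : ℕ) (hk : 2 ≤ k) (β : ℝ) (hβ : 0 < β)
    (q r : Fin k → ℝ) (hq : ∀ i, 0 < q i) (hqs : ∑ i, q i = 1)
    (πhat : Fin k → ℝ)
    (hπhat : ∀ i, πhat i = q i * Real.exp (r i / β) / ∑ j, q j * Real.exp (r j / β))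
    (i₁ i₂ : Fin k) (hne : i₁ ≠ i₂)
    (pref prew : ℝ)
    (hpref : pref = q i₁ / (q i₁ + q i₂))
    (hprew : prew = Real.exp (r i₁ / β) / (Real.exp (r i₁ / β) + Real.exp (r i₂ / β))) :
    πhat i₁ / (πhat i₁ + πhat i₂)
      = pref * prew / (pref * prew + (1 - pref) * (1 - prew)) :=
  kl_rlhf_pairwise_preference_product_general k β q r hq πhat hπhat i₁ i₂ pref prew hpref hprew
end

section
/- Let k ≥ 2, β > 0, let q be a probability vector on Fin k, let r : Fin k → ℝ, and define π̂_i = q_i·exp(r_i/β)/Σ_j q_j·exp(r_j/β), assuming Σ_j q_j·exp(r_j/β) > 0. For distinct indices i₁, i₂: if q_{i₁} = 0 and q_{i₂} > 0, then π̂_{i₁}/(π̂_{i₁}+π̂_{i₂}) = 0; and if q_{i₂} = 0 and q_{i₁} > 0, then π̂_{i₁}/(π̂_{i₁}+π̂_{i₂}) = 1. That is, whenever the reference model's conditional preference between two responses is 0 or 1, the KL RLHF–aligned model exhibits preference collapse: its conditional preference is also exactly 0 or 1, irrespective of the reward values. -/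
/-- Preference collapse: whenever the reference model's conditional preference between
two responses is 0 or 1, so is the KL RLHF–aligned model's, irrespective of rewards. -/
theorem kl_rlhf_preference_collapse
    (k : ℕ) (hk : 2 ≤ k) (β : ℝ) (hβ : 0 < β)
    (q r : Fin k → ℝ) (hq : ∀ i, 0 ≤ q i) (hqs : ∑ i, q i = 1)
    (hZ : 0 < ∑ j, q j * Real.exp (r j / β))
    (πhat : Fin k → ℝ)
    (hπhat : ∀ i, πhat i = q i * Real.exp (r i / β) / ∑ j, q j * Real.exp (r j / β))
    (i₁ i₂ : Fin k) (hne : i₁ ≠ i₂) :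
    (q i₁ = 0 → 0 < q i₂ → πhat i₁ / (πhat i₁ + πhat i₂) = 0) ∧
    (q i₂ = 0 → 0 < q i₁ → πhat i₁ / (πhat i₁ + πhat i₂) = 1) := by
  constructor
  · intro h1 h2
    rw [hπhat i₁, h1]
    simp
  · intro h1 h2
    rw [hπhat i₁, hπhat i₂, h1]
    have hpos : 0 < q i₁ * Real.exp (r i₁ / β) / ∑ j, q j * Real.exp (r j / β) :=
      div_pos (mul_pos h2 (Real.exp_pos _)) hZ
    simp [div_self hpos.ne']
end

section
/- Let k ≥ 1, r : Fin k → ℝ, let M ⊆ Fin k, and let ε : Fin k → ℝ with ε_i > 0 for all i. Over all strictly positive probability vectors π on Fin k, the conditional preference matching objective Σ_{i∈M} π_i·(r_i − log π_i) + Σ_{i∉M} π_i·(r_i − log(π_i/ε_i)) is uniquely maximized by π̂_i = w_i/Σ_j w_j, where w_i = exp(r_i) for i ∈ M and w_i = ε_i·exp(r_i) for i ∉ M. In particular, if M is nonempty, then for every i ∈ M the maximizer satisfies π̂_i/Σ_{j∈M} π̂_j = exp(r_i)/Σ_{j∈M} exp(r_j); that is, the optimal policy conditioned on M is the preference-matching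 softmax restricted to M. (This is Theorem 4 on conditional PM RLHF.) -/
/-!
With `w` the reweighted exponentials and `S = ∑ j, w j`, the `ε_i` inside the logarithms recombine
with `exp (r i)`, so the objective at a positive `π` is `∑ i, π i * (log (w i) - log (π i))`.
This equals `log S + ∑ i, π i * log (π̂ i / π i)` for `π̂ = w / S`, and the last sum is
`-∑ i, π̂ i * klFun (π i / π̂ i)` because `π` and `π̂` have the same total mass (Gibbs' inequality),
which is `≤ 0` with equality iff `π = π̂`, since `klFun ≥ 0` vanishes only at `1`.
-/

open Finset InformationTheory

section Gibbs

open Real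

lemma mul_log_div_eq_sub_sub_mul_klFun {p q : ℝ} (hp : 0 < p) (hq : 0 < q) :
    p * log (q / p) = q - p - q * klFun (p / q) := by
  rw [klFun_apply, log_div hq.ne' hp.ne', log_div hp.ne' hq.ne']
  field_simp
  ring

variable {ι : Type*} [Fintype ι] {p q : ι → ℝ}

theorem sum_mul_log_div_eq_neg_sum_klFun (hp : ∀ i, 0 < p i) (hq : ∀ i, 0 < q i)
    (hpq : ∑ i, p i = ∑ i, q i) :
    ∑ i, p i * log (q i / p i) = -∑ i, q i * klFun (p i / q i) := by
  simp only [mul_log_div_eq_sub_sub_mul_klFun (hp _) (hq _), sum_sub_distrib, hpq]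
  ring

theorem sum_mul_log_div_nonpos (hp : ∀ i, 0 < p i) (hq : ∀ i, 0 < q i)
    (hpq : ∑ i, p i = ∑ i, q i) :
    ∑ i, p i * log (q i / p i) ≤ 0 := by
  rw [sum_mul_log_div_eq_neg_sum_klFun hp hq hpq, neg_nonpos]
  exact sum_nonneg fun i _ ↦ mul_nonneg (hq i).le (klFun_nonneg (div_pos (hp i) (hq i)).le)

theorem sum_mul_log_div_eq_zero_iff (hp : ∀ i, 0 < p i) (hq : ∀ i, 0 < q i)
    (hpq : ∑ i, p i = ∑ i, q i) :
    ∑ i, p i * log (q i / p i) = 0 ↔ ∀ i, p i = q i := by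
  have hkl_nonneg : ∀ i ∈ univ, 0 ≤ q i * klFun (p i / q i) := fun i _ ↦
    mul_nonneg (hq i).le (klFun_nonneg (div_pos (hp i) (hq i)).le)
  rw [sum_mul_log_div_eq_neg_sum_klFun hp hq hpq, neg_eq_zero,
    sum_eq_zero_iff_of_nonneg hkl_nonneg]
  refine forall_congr' fun i ↦ ?_
  rw [mul_eq_zero, or_iff_right (hq i).ne', klFun_eq_zero_iff (div_pos (hp i) (hq i)).le,
    div_eq_one_iff_eq (hq i).ne']
  simp

variable {w : ι → ℝ} [Nonempty ι]

lemma div_sum_pos (hw : ∀ i, 0 < w i) (i : ι) : 0 < w i / ∑ j, w j :=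
  div_pos (hw i) (sum_pos (fun j _ ↦ hw j) univ_nonempty)

lemma sum_div_sum_self (hw : ∀ i, 0 < w i) : ∑ i, w i / ∑ j, w j = 1 := by
  rw [← sum_div, div_self (sum_pos (fun j _ ↦ hw j) univ_nonempty).ne']

theorem sum_mul_log_sub_log_eq_log_sum_add (hw : ∀ i, 0 < w i) (hp : ∀ i, 0 < p i)
    (hp1 : ∑ i, p i = 1) :
    ∑ i, p i * (log (w i) - log (p i))
      = log (∑ j, w j) + ∑ i, p i * log (w i / (∑ j, w j) / p i) := by
  have hS : 0 < ∑ j, w j := sum_pos (fun i _ ↦ hw i) univ_nonempty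
  have hterm : ∀ i, p i * log (w i / (∑ j, w j) / p i)
      = p i * (log (w i) - log (p i)) - p i * log (∑ j, w j) := fun i ↦ by
    rw [log_div (div_pos (hw i) hS).ne' (hp i).ne', log_div (hw i).ne' hS.ne']
    ring
  simp only [hterm, sum_sub_distrib, ← sum_mul, hp1]
  ring

theorem sum_mul_log_sub_log_le_log_sum (hw : ∀ i, 0 < w i) (hp : ∀ i, 0 < p i)
    (hp1 : ∑ i, p i = 1) :
    ∑ i, p i * (log (w i) - log (p i)) ≤ log (∑ j, w j) := by
  have := sum_mul_log_div_nonpos hp (div_sum_pos hw) (hp1.trans (sum_div_sum_self hw).symm)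
  rw [sum_mul_log_sub_log_eq_log_sum_add hw hp hp1]
  linarith

theorem sum_mul_log_sub_log_eq_log_sum_iff (hw : ∀ i, 0 < w i) (hp : ∀ i, 0 < p i)
    (hp1 : ∑ i, p i = 1) :
    ∑ i, p i * (log (w i) - log (p i)) = log (∑ j, w j) ↔ ∀ i, p i = w i / ∑ j, w j := by
  rw [sum_mul_log_sub_log_eq_log_sum_add hw hp hp1, add_eq_left]
  exact sum_mul_log_div_eq_zero_iff hp (div_sum_pos hw) (hp1.trans (sum_div_sum_self hw).symm)

end Gibbs

lemma div_sum_eq_div_sum_of_eq_div {ι K : Type*} [DivisionRing K] {s : Finset ι} {f g : ι → K}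
    {c : K} (hc : c ≠ 0) (hgf : ∀ j ∈ s, g j = f j / c) {i : ι} (hi : i ∈ s) :
    g i / ∑ j ∈ s, g j = f i / ∑ j ∈ s, f j := by
  rw [sum_congr rfl hgf, ← sum_div, hgf i hi, div_div_div_cancel_right₀ hc]

theorem conditionalPM_objective_eq {ι : Type*} [Fintype ι] [DecidableEq ι]
    {r ε w p : ι → ℝ} {M : Finset ι} (hε : ∀ i, 0 < ε i)
    (hw : ∀ i, w i = if i ∈ M then Real.exp (r i) else ε i * Real.exp (r i))
    (hp : ∀ i, 0 < p i) :
    ∑ i ∈ M, p i * (r i - Real.log (p i)) + ∑ i ∈ Mᶜ, p i * (r i - Real.log (p i / ε i))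
      = ∑ i, p i * (Real.log (w i) - Real.log (p i)) := by
  rw [← sum_add_sum_compl M]
  congr 1
  · refine sum_congr rfl fun i hi ↦ ?_
    rw [hw i, if_pos hi, Real.log_exp]
  · refine sum_congr rfl fun i hi ↦ ?_
    rw [hw i, if_neg (mem_compl.1 hi), Real.log_mul (hε i).ne' (Real.exp_pos _).ne',
      Real.log_exp, Real.log_div (hp i).ne' (hε i).ne']
    ring

theorem conditional_preference_matching_general
    (k : ℕ) (r : Fin k → ℝ) (M : Finset (Fin k))
    (ε : Fin k → ℝ) (hε : ∀ i, 0 < ε i)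
    (w πhat : Fin k → ℝ)
    (hw : ∀ i, w i = if i ∈ M then Real.exp (r i) else ε i * Real.exp (r i))
    (hπhat : ∀ i, πhat i = w i / ∑ j, w j) :
    (∀ π : Fin k → ℝ, (∀ i, 0 < π i) → (∑ i, π i = 1) →
      (∑ i ∈ M, π i * (r i - Real.log (π i))
          + ∑ i ∈ Mᶜ, π i * (r i - Real.log (π i / ε i))
        ≤ ∑ i ∈ M, πhat i * (r i - Real.log (πhat i))
          + ∑ i ∈ Mᶜ, πhat i * (r i - Real.log (πhat i / ε i))) ∧
      ((∑ i ∈ M, π i * (r i - Real.log (π i))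
          + ∑ i ∈ Mᶜ, π i * (r i - Real.log (π i / ε i))
        = ∑ i ∈ M, πhat i * (r i - Real.log (πhat i))
          + ∑ i ∈ Mᶜ, πhat i * (r i - Real.log (πhat i / ε i))) ↔
        ∀ i, π i = πhat i)) ∧
    (M.Nonempty → ∀ i ∈ M,
      πhat i / ∑ j ∈ M, πhat j = Real.exp (r i) / ∑ j ∈ M, Real.exp (r j)) := by
  have hw_pos : ∀ i, 0 < w i := fun i ↦ by
    rw [hw i]; split_ifs
    exacts [Real.exp_pos _, mul_pos (hε i) (Real.exp_pos _)]
  refine ⟨fun π hπ hπ1 ↦ ?_, fun _ i hi ↦ ?_⟩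
  · obtain ⟨i₀, -⟩ := exists_ne_zero_of_sum_ne_zero (by simp [hπ1] : ∑ i, π i ≠ 0)
    have : Nonempty (Fin k) := ⟨i₀⟩
    have hπhat_pos : ∀ i, 0 < πhat i := fun i ↦ hπhat i ▸ div_sum_pos hw_pos i
    have hπhat_sum : ∑ i, πhat i = 1 := by simp only [hπhat, sum_div_sum_self hw_pos]
    rw [conditionalPM_objective_eq hε hw hπ, conditionalPM_objective_eq hε hw hπhat_pos,
      (sum_mul_log_sub_log_eq_log_sum_iff hw_pos hπhat_pos hπhat_sum).2 hπhat]
    refine ⟨sum_mul_log_sub_log_le_log_sum hw_pos hπ hπ1, ?_⟩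
    simp only [sum_mul_log_sub_log_eq_log_sum_iff hw_pos hπ hπ1, hπhat]
  · have : Nonempty (Fin k) := ⟨i⟩
    refine div_sum_eq_div_sum_of_eq_div (g := πhat) (f := fun j ↦ Real.exp (r j))
      (sum_pos (fun j _ ↦ hw_pos j) univ_nonempty).ne' (fun j hj ↦ ?_) hi
    rw [hπhat j, hw j, if_pos hj]

/-- Theorem 4 on conditional PM RLHF: the conditional preference matching objective is
uniquely maximized by the reweighted softmax, and the optimal policy conditioned on the
regular set `M` is the preference-matching softmax restricted to `M`. -/
theorem conditional_preference_matching
    (k : ℕ) (hk : 1 ≤ k) (r : Fin k → ℝ) (M : Finset (Fin k))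
    (ε : Fin k → ℝ) (hε : ∀ i, 0 < ε i)
    (w πhat : Fin k → ℝ)
    (hw : ∀ i, w i = if i ∈ M then Real.exp (r i) else ε i * Real.exp (r i))
    (hπhat : ∀ i, πhat i = w i / ∑ j, w j) :
    (∀ π : Fin k → ℝ, (∀ i, 0 < π i) → (∑ i, π i = 1) →
      (∑ i ∈ M, π i * (r i - Real.log (π i))
          + ∑ i ∈ Mᶜ, π i * (r i - Real.log (π i / ε i))
        ≤ ∑ i ∈ M, πhat i * (r i - Real.log (πhat i))
          + ∑ i ∈ Mᶜ, πhat i * (r i - Real.log (πhat i / ε i))) ∧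
      ((∑ i ∈ M, π i * (r i - Real.log (π i))
          + ∑ i ∈ Mᶜ, π i * (r i - Real.log (π i / ε i))
        = ∑ i ∈ M, πhat i * (r i - Real.log (πhat i))
          + ∑ i ∈ Mᶜ, πhat i * (r i - Real.log (πhat i / ε i))) ↔
        ∀ i, π i = πhat i)) ∧
    (M.Nonempty → ∀ i ∈ M,
      πhat i / ∑ j ∈ M, πhat j = Real.exp (r i) / ∑ j ∈ M, Real.exp (r j)) :=
  conditional_preference_matching_general k r M ε hε w πhat hw hπhat
end

section
/- Let k ≥ 1 and let p be a strictly positive probability vector on Fin k. Then sup over x ∈ ℝ^k of (Σ_i p_i·x_i − log Σ_i exp(x_i)) equals Σ_i p_i·log p_i, and the supremum is attained at x_i = log p_i. That is, the Fenchel conjugate of the log-sum-exp function, evaluated at a strictly positive probability vector, equals the negative Shannon entropy of that vector. -/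
/-- The Fenchel conjugate of the log-sum-exp function at a strictly positive probability
vector equals its negative Shannon entropy, attained at `x i = log (p i)`. -/
theorem logsumexp_fenchel_conjugate
    (k : ℕ) (hk : 1 ≤ k) (p : Fin k → ℝ)
    (hp : ∀ i, 0 < p i) (hps : ∑ i, p i = 1) :
    (∀ x : Fin k → ℝ,
      ∑ i, p i * x i - Real.log (∑ i, Real.exp (x i)) ≤ ∑ i, p i * Real.log (p i)) ∧
    (∑ i, p i * Real.log (p i) - Real.log (∑ i, Real.exp (Real.log (p i)))
      = ∑ i, p i * Real.log (p i)) := by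
  constructor
  · intro x
    have hconc : ConcaveOn ℝ (Set.Ioi 0) Real.log := strictConcaveOn_log_Ioi.concaveOn
    have hjensen := hconc.le_map_sum (t := Finset.univ)
      (w := p) (p := fun i => Real.exp (x i) / p i)
      (fun i _ => (hp i).le) hps
      (fun i _ => Set.mem_Ioi.mpr (div_pos (Real.exp_pos _) (hp i)))
    simp only [smul_eq_mul] at hjensen
    have h1 : ∀ i : Fin k, p i * Real.log (Real.exp (x i) / p i)
        = p i * x i - p i * Real.log (p i) := by
      intro i
      rw [Real.log_div (Real.exp_pos _).ne' (hp i).ne', Real.log_exp, mul_sub]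
    have h2 : ∀ i : Fin k, p i * (Real.exp (x i) / p i) = Real.exp (x i) := by
      intro i; rw [mul_div_cancel₀ _ (hp i).ne']
    rw [Finset.sum_congr rfl (fun i _ => h1 i), Finset.sum_congr rfl (fun i _ => h2 i)]
      at hjensen
    rw [Finset.sum_sub_distrib] at hjensen
    linarith
  · have : ∀ i : Fin k, Real.exp (Real.log (p i)) = p i :=
      fun i => Real.exp_log (hp i)
    rw [Finset.sum_congr rfl (fun i _ => this i), hps, Real.log_one, sub_zero]
end

section
/- Let k ≥ 1, let π be a strictly positive probability vector on Fin k, and let r : Fin k → ℝ. Then inf over r' ∈ ℝ^k of (Σ_i π_i·r'_i + log Σ_i exp(r_i − r'_i)) equals Σ_i π_i·r_i + Σ_i π_i·log π_i, and the infimum is attained at r'_i = r_i − log π_i. That is, the entropy-regularized PM RLHF objective Σ_i π_i·(r_i − log π_i) equals the negative of the robust adversarially-perturbed reward value, establishing the dual (robust-optimization) formulation of PM RLHF. -/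
/-! Concavity of `log` (Jensen) at the points `exp (x i) / w i` with weights `w i` gives the
Gibbs variational inequality `∑ wᵢ xᵢ - ∑ wᵢ log wᵢ ≤ log ∑ exp xᵢ`; applied to `x = r - r'`
it is the lower bound on the robust objective. At `r' = r - log π` every `exp (r i - r' i)`
equals `π i`, the log-sum-exp term vanishes, and the bound is attained. -/

open Finset

namespace Real

theorem sum_mul_sub_sum_mul_log_le_log_sum_exp {ι : Type*} [Fintype ι] (w x : ι → ℝ)
    (hw : ∀ i, 0 < w i) (hsum : ∑ i, w i = 1) :
    ∑ i, w i * x i - ∑ i, w i * log (w i) ≤ log (∑ i, exp (x i)) := by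
  have hjensen := strictConcaveOn_log_Ioi.concaveOn.le_map_sum (t := univ) (w := w)
    (p := fun i => exp (x i) / w i) (fun i _ => (hw i).le) hsum
    (fun i _ => div_pos (exp_pos _) (hw i))
  have hcancel : ∀ i, w i • (exp (x i) / w i) = exp (x i) := fun i =>
    mul_div_cancel₀ _ (hw i).ne'
  have hlog : ∀ i, w i • log (exp (x i) / w i) = w i * x i - w i * log (w i) := fun i => by
    rw [smul_eq_mul, log_div (exp_pos _).ne' (hw i).ne', log_exp, mul_sub]
  simpa only [hcancel, hlog, sum_sub_distrib] using hjensen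

end Real

theorem pm_rlhf_dual_robust_formulation_general
    (k : ℕ) (π : Fin k → ℝ)
    (hpos : ∀ i, 0 < π i) (hsum : ∑ i, π i = 1)
    (r : Fin k → ℝ) :
    (∀ r' : Fin k → ℝ,
      ∑ i, π i * r i - ∑ i, π i * Real.log (π i)
        ≤ ∑ i, π i * r' i + Real.log (∑ i, Real.exp (r i - r' i))) ∧
    (∑ i, π i * (r i - Real.log (π i))
        + Real.log (∑ i, Real.exp (r i - (r i - Real.log (π i))))
      = ∑ i, π i * r i - ∑ i, π i * Real.log (π i)) := by
  constructor
  · intro r'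
    have hgibbs := Real.sum_mul_sub_sum_mul_log_le_log_sum_exp π (fun i => r i - r' i) hpos hsum
    simp only [mul_sub, sum_sub_distrib] at hgibbs
    linarith
  · simp only [sub_sub_cancel, Real.exp_log (hpos _), hsum, Real.log_one, add_zero, mul_sub,
      sum_sub_distrib]

/-- Dual (robust-optimization) formulation of PM RLHF: the adversarially perturbed
objective is minimized over `r'` at `r' i = r i - log (π i)`, with minimum value equal
to the entropy-regularized PM RLHF objective `∑ i, π i * (r i - log (π i))`. -/
theorem pm_rlhf_dual_robust_formulation
    (k : ℕ) (hk : 1 ≤ k) (π : Fin k → ℝ)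
    (hpos : ∀ i, 0 < π i) (hsum : ∑ i, π i = 1)
    (r : Fin k → ℝ) :
    (∀ r' : Fin k → ℝ,
      ∑ i, π i * r i - ∑ i, π i * Real.log (π i)
        ≤ ∑ i, π i * r' i + Real.log (∑ i, Real.exp (r i - r' i))) ∧
    (∑ i, π i * (r i - Real.log (π i))
        + Real.log (∑ i, Real.exp (r i - (r i - Real.log (π i))))
      = ∑ i, π i * r i - ∑ i, π i * Real.log (π i)) :=
  pm_rlhf_dual_robust_formulation_general k π hpos hsum r
end
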